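/- Let M be a local Moufang set with basis (0,∞). Then G decomposes as the disjoint union G = U_0 H U_∞ ⊔ U_0 H τ U_0^∘, where H is the Hua subgroup and τ a fixed μ-map; consequently the point stabilizer satisfies G_0 = U_0 H, and the two-point stabilizer satisfies G_{0,∞} = H. -/

import Mathlib

/-!
Local Moufang sets, following E. Rijcken, "Local Moufang sets".
A local Moufang set is a set `X` with an equivalence relation (a `Setoid`)
having more than 2 classes, together with root groups `U x` of
equivalence-preserving permutations, satisfying (LM0), (LM1), (LM1'), (LM2).
We use left actions; the paper's right-composition word `a₁a₂⋯aₙ` corresponds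
to our product `aₙ * ⋯ * a₁`, and the paper's conjugation `g^h = h⁻¹gh`
corresponds to `h * g * h⁻¹` (i.e. `MulAut.conj h g`).
-/

variable {X : Type*}

/-- A permutation of `X` preserves the equivalence relation `r`. -/
def PreservesRel (r : Setoid X) (g : Equiv.Perm X) : Prop :=
  ∀ a b : X, r.r a b ↔ r.r (g a) (g b)

/-- A local pre-Moufang set: axioms (LM0), (LM1), (LM1'). -/
structure IsLocalPreMoufangSet (r : Setoid X) (U : X → Subgroup (Equiv.Perm X)) : Prop where
  /-- `X` has more than two equivalence classes. -/
  big : ∃ a b c : X, ¬ r.r a b ∧ ¬ r.r a c ∧ ¬ r.r b c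
  /-- root groups consist of equivalence-preserving permutations -/
  preserves : ∀ x : X, ∀ g ∈ U x, PreservesRel r g
  /-- (LM0): if `x ∼ y` then the induced actions of `U x` and `U y` on the quotient agree -/
  lm0 : ∀ x y : X, r.r x y → ∀ g ∈ U x, ∃ h ∈ U y, ∀ a : X, r.r (g a) (h a)
  /-- (LM1): `U x` fixes `x` ... -/
  fixes : ∀ x : X, ∀ g ∈ U x, g x = x
  /-- (LM1): ... and acts sharply transitively on the complement of the class of `x` -/
  lm1 : ∀ x a b : X, ¬ r.r a x → ¬ r.r b x → ∃! g : Equiv.Perm X, g ∈ U x ∧ g a = b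
  /-- (LM1'): the induced action on the quotient is transitive away from the class of `x` ... -/
  lm1'_trans : ∀ x a b : X, ¬ r.r a x → ¬ r.r b x → ∃ g ∈ U x, r.r (g a) b
  /-- (LM1'): ... and sharply so -/
  lm1'_sharp : ∀ x : X, ∀ g ∈ U x, ∀ h ∈ U x, ∀ a : X, ¬ r.r a x →
    r.r (g a) (h a) → ∀ b : X, r.r (g b) (h b)

/-- A local Moufang set: a local pre-Moufang set satisfying (LM2). -/
structure IsLocalMoufangSet (r : Setoid X) (U : X → Subgroup (Equiv.Perm X))
    extends IsLocalPreMoufangSet r U : Prop where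
  /-- (LM2): `U x ^ g = U (x g)` for all `g` in the little projective group `⟨U y : y⟩` -/
  lm2 : ∀ x : X, ∀ g ∈ (⨆ y : X, U y), (U x).map (MulAut.conj g).toMonoidHom = U (g x)

/-- `μ` is the μ-map of the point `x` w.r.t. the basis `(o, i) = (0, ∞)`:
it lies in the double coset `U 0 · α_x · U 0` (where `α_x` is the unique element
of `U ∞` with `0 · α_x = x`) and interchanges `0` and `∞`. -/
def IsMuMap (U : X → Subgroup (Equiv.Perm X)) (o i x : X) (μ : Equiv.Perm X) : Prop :=
  ∃ a : Equiv.Perm X, a ∈ U i ∧ a o = x ∧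
    (∃ u ∈ U o, ∃ v ∈ U o, μ = u * a * v) ∧ μ o = i ∧ μ i = o

/-- The Hua subgroup `H = ⟨μ_x μ_y : x, y units⟩` w.r.t. the basis `(o, i) = (0, ∞)`. -/
def HuaSubgroup (r : Setoid X) (U : X → Subgroup (Equiv.Perm X)) (o i : X) :
    Subgroup (Equiv.Perm X) :=
  Subgroup.closure {g | ∃ x y μx μy, (¬ r.r x o ∧ ¬ r.r x i) ∧ (¬ r.r y o ∧ ¬ r.r y i) ∧
    IsMuMap U o i x μx ∧ IsMuMap U o i y μy ∧ g = μx * μy}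

/-!
The little projective group is generated by `U₀` and `τ`: `U∞ = τ U₀ τ⁻¹`, and every other root
group is conjugate to `U₀` or `U∞` by an element of `U∞` or `U₀`. So it suffices that the union of
the two cells is stable under left multiplication by `U₀` and `τ^{±1}`. As `τ` normalises `H` and
`τ² ∈ H`, everything comes down to showing that `c τ` and `c v` lie in a cell for `c ∈ U₀`,
`v ∈ U∞`. If `v` moves `0` out of its class, the μ-map of `v 0` lies in `U₀ v U₀` and differs
from `τ` by an element of `H`, so `v ∈ U₀ τ H U₀`; this also settles `c τ = τ (τ⁻¹ c τ)`. If `v`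
acts trivially on `X̄`, comparing the μ-maps of a unit `x` and of `v x` writes `v` as a
`U₀`-conjugate of `k h w` with `k ∈ U₀`, `w ∈ U∞` trivial on `X̄`; conjugating by `τ` reduces a
product of two such elements to the first case. The cells are told apart by whether `0` lands in
the class of `∞`, and the stabiliser statements follow because `U∞` and `U₀` act freely away
from the classes of `∞` and `0`.
-/

open Equiv

/-- Elements of `U₀` with this property form the kernel `U₀^∘` of the action of `U₀` on `X̄`. -/
def FixesClasses (r : Setoid X) (g : Perm X) : Prop :=
  ∀ b, r.r (g b) b

def IsUnitMuMap (r : Setoid X) (U : X → Subgroup (Perm X)) (o i : X) (μ : Perm X) : Prop :=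
  ∃ x, ¬ r.r x o ∧ ¬ r.r x i ∧ IsMuMap U o i x μ

section Relations

variable {r : Setoid X} {g k : Perm X}

theorem PreservesRel.inv (hg : PreservesRel r g) : PreservesRel r g⁻¹ := fun a b => by
  simpa using (hg (g⁻¹ a) (g⁻¹ b)).symm

theorem PreservesRel.rel_inv_apply_iff (hg : PreservesRel r g) {a b : X} :
    r.r (g⁻¹ a) b ↔ r.r a (g b) := by
  rw [hg]; simp

theorem not_fixesClasses_of_apply_eq {x y : X} (h : g x = y) (hxy : ¬ r.r x y) :
    ¬ FixesClasses r g :=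
  fun hg => hxy (r.iseqv.symm (h ▸ hg x))

namespace FixesClasses

theorem mul (hg : FixesClasses r g) (hk : FixesClasses r k) : FixesClasses r (g * k) :=
  fun b => r.iseqv.trans (hg (k b)) (hk b)

theorem inv (hg : FixesClasses r g) : FixesClasses r g⁻¹ := fun b => by
  simpa using r.iseqv.symm (hg (g⁻¹ b))

theorem conj (hk : FixesClasses r k) (hg : PreservesRel r g) : FixesClasses r (g * k * g⁻¹) :=
  fun b => by simpa using (hg (k (g⁻¹ b)) (g⁻¹ b)).mp (hk (g⁻¹ b))

theorem conj_iff (hg : PreservesRel r g) : FixesClasses r (g * k * g⁻¹) ↔ FixesClasses r k :=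
  ⟨fun h => by simpa [mul_assoc] using h.conj hg.inv, fun h => h.conj hg⟩

theorem inv_conj_iff (hg : PreservesRel r g) :
    FixesClasses r (g⁻¹ * k * g) ↔ FixesClasses r k := by
  simpa using conj_iff hg.inv

theorem mul_iff_left (hk : FixesClasses r k) : FixesClasses r (g * k) ↔ FixesClasses r g :=
  ⟨fun h => by simpa using h.mul hk.inv, fun h => h.mul hk⟩

theorem mul_iff_right (hg : FixesClasses r g) : FixesClasses r (g * k) ↔ FixesClasses r k :=
  ⟨fun h => by simpa using hg.inv.mul h, hg.mul⟩

end FixesClasses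

end Relations

namespace IsLocalMoufangSet

variable {r : Setoid X} {U : X → Subgroup (Perm X)} {g k b : Perm X} {p q a : X}

theorem preservesRel (hM : IsLocalMoufangSet r U) (hg : g ∈ ⨆ y, U y) : PreservesRel r g :=
  Subgroup.iSup_induction U hg (C := PreservesRel r) (fun y _ hx => hM.preserves y _ hx)
    (fun _ _ => Iff.rfl) fun _ y hx hy a b => (hy a b).trans (hx (y a) (y b))

theorem conj_mem (hM : IsLocalMoufangSet r U) (hg : g ∈ ⨆ y, U y) (hb : b ∈ U p)
    (hq : g p = q) : g * b * g⁻¹ ∈ U q := by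
  subst hq
  rw [← hM.lm2 p g hg]
  exact ⟨b, hb, MulAut.conj_apply g b⟩

theorem inv_conj_mem (hM : IsLocalMoufangSet r U) (hg : g ∈ ⨆ y, U y) (hb : b ∈ U p)
    (hq : g q = p) : g⁻¹ * b * g ∈ U q := by
  simpa using hM.conj_mem (inv_mem hg) hb (Perm.inv_eq_iff_eq.mpr hq.symm)

theorem rootGroup_le_of_apply_eq (hM : IsLocalMoufangSet r U) {K : Subgroup (Perm X)}
    (hg : g ∈ ⨆ y, U y) (hgK : g ∈ K) (hp : U p ≤ K) (hq : g p = q) : U q ≤ K := by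
  subst hq
  rw [← hM.lm2 p g hg]
  rintro _ ⟨b, hb, rfl⟩
  exact mul_mem (mul_mem hgK (hp hb)) (inv_mem hgK)

theorem rel_apply_iff (hM : IsLocalMoufangSet r U) (hg : g ∈ U p) : r.r (g a) p ↔ r.r a p := by
  rw [hM.preserves p g hg a p, hM.fixes p g hg]

theorem eq_of_apply_eq (hM : IsLocalMoufangSet r U) {a' : X} (ha : ¬ r.r a p)
    (ha' : ¬ r.r a' p) (hg : g ∈ U p) (hk : k ∈ U p) (hga : g a = a') (hka : k a = a') :
    g = k :=
  (hM.lm1 p a a' ha ha').unique ⟨hg, hga⟩ ⟨hk, hka⟩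

theorem fixesClasses_mul_inv (hM : IsLocalMoufangSet r U) (hg : g ∈ U p) (hk : k ∈ U p)
    (ha : ¬ r.r a p) (h : r.r (g a) (k a)) : FixesClasses r (g * k⁻¹) := fun b => by
  simpa using hM.lm1'_sharp p g hg k hk a ha h (k⁻¹ b)

theorem fixesClasses_inv_mul (hM : IsLocalMoufangSet r U) (hg : g ∈ U p) (hk : k ∈ U p)
    (ha : ¬ r.r a p) (h : r.r (g a) (k a)) : FixesClasses r (k⁻¹ * g) := by
  simpa [mul_assoc] using (hM.fixesClasses_mul_inv hg hk ha h).conj (hM.preserves p k hk).inv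

theorem fixesClasses_of_rel (hM : IsLocalMoufangSet r U) (hg : g ∈ U p) (ha : ¬ r.r a p)
    (h : r.r (g a) a) : FixesClasses r g := by
  simpa using hM.fixesClasses_mul_inv hg (one_mem _) ha h

end IsLocalMoufangSet

section

variable {r : Setoid X} {U : X → Subgroup (Perm X)} {o i : X} {τ μ ν g h k u v w c : Perm X}

namespace IsUnitMuMap

theorem mem_iSup (hμ : IsUnitMuMap r U o i μ) : μ ∈ ⨆ y, U y := by
  obtain ⟨-, -, -, a, ha, -, ⟨u, hu, c, hc, rfl⟩, -⟩ := hμ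
  exact mul_mem (mul_mem (Subgroup.mem_iSup_of_mem o hu) (Subgroup.mem_iSup_of_mem i ha))
    (Subgroup.mem_iSup_of_mem o hc)

theorem apply_o (hμ : IsUnitMuMap r U o i μ) : μ o = i := by
  obtain ⟨-, -, -, -, -, -, -, h, -⟩ := hμ
  exact h

theorem apply_i (hμ : IsUnitMuMap r U o i μ) : μ i = o := by
  obtain ⟨-, -, -, -, -, -, -, -, h⟩ := hμ
  exact h

theorem inv (hμ : IsUnitMuMap r U o i μ) (hM : IsLocalMoufangSet r U) (hoi : ¬ r.r o i) :
    IsUnitMuMap r U o i μ⁻¹ := by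
  obtain ⟨x, hxo, -, a, ha, rfl, ⟨u, hu, c, hc, rfl⟩, hμo, hμi⟩ := hμ
  refine ⟨a⁻¹ o, ?_, ?_, a⁻¹, inv_mem ha, rfl, ⟨c⁻¹, inv_mem hc, u⁻¹, inv_mem hu, by group⟩,
    ?_, ?_⟩
  · rw [(hM.preserves i a ha).rel_inv_apply_iff]
    exact fun h => hxo (r.iseqv.symm h)
  · rwa [hM.rel_apply_iff (inv_mem ha)]
  · rw [Perm.inv_eq_iff_eq, hμi]
  · rw [Perm.inv_eq_iff_eq, hμo]

theorem mul_mem_huaSubgroup (hμ : IsUnitMuMap r U o i μ) (hν : IsUnitMuMap r U o i ν) :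
    μ * ν ∈ HuaSubgroup r U o i :=
  let ⟨x, hxo, hxi, hx⟩ := hμ
  let ⟨y, hyo, hyi, hy⟩ := hν
  Subgroup.subset_closure ⟨x, y, μ, ν, ⟨hxo, hxi⟩, ⟨hyo, hyi⟩, hx, hy, rfl⟩

theorem mul_self_mem_huaSubgroup (hμ : IsUnitMuMap r U o i μ) : μ * μ ∈ HuaSubgroup r U o i :=
  hμ.mul_mem_huaSubgroup hμ

end IsUnitMuMap

theorem huaSubgroup_le_iSup : HuaSubgroup r U o i ≤ ⨆ y, U y :=
  (Subgroup.closure_le _).mpr fun _ ⟨x, y, _, _, hx, hy, hμ, hν, h⟩ =>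
    h ▸ mul_mem (IsUnitMuMap.mem_iSup ⟨x, hx.1, hx.2, hμ⟩) (IsUnitMuMap.mem_iSup ⟨y, hy.1, hy.2, hν⟩)

theorem apply_eq_of_mem_huaSubgroup (hh : h ∈ HuaSubgroup r U o i) : h o = o ∧ h i = i := by
  have hle : HuaSubgroup r U o i ≤
      MulAction.stabilizer (Perm X) o ⊓ MulAction.stabilizer (Perm X) i :=
    (Subgroup.closure_le _).mpr fun _ ⟨x, y, _, _, hx, hy, hμ, hν, h⟩ => by
      have hμ' : IsUnitMuMap r U o i _ := ⟨x, hx.1, hx.2, hμ⟩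
      have hν' : IsUnitMuMap r U o i _ := ⟨y, hy.1, hy.2, hν⟩
      subst h
      constructor <;> simp [Perm.smul_def, hμ'.apply_o, hμ'.apply_i, hν'.apply_o, hν'.apply_i]
  exact hle hh

theorem conj_mem_huaSubgroup (hM : IsLocalMoufangSet r U) (hoi : ¬ r.r o i)
    (hμ : IsUnitMuMap r U o i μ) (hh : h ∈ HuaSubgroup r U o i) :
    μ * h * μ⁻¹ ∈ HuaSubgroup r U o i := by
  have hle : HuaSubgroup r U o i ≤ (HuaSubgroup r U o i).comap (MulAut.conj μ).toMonoidHom :=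
    (Subgroup.closure_le _).mpr fun _ ⟨x, y, μx, μy, hx, hy, hμx, hμy, h⟩ => by
      subst h
      rw [SetLike.mem_coe, Subgroup.mem_comap, MulEquiv.coe_toMonoidHom, MulAut.conj_apply,
        show μ * (μx * μy) * μ⁻¹ = (μ * μx) * (μy * μ⁻¹) by group]
      exact mul_mem (hμ.mul_mem_huaSubgroup ⟨x, hx.1, hx.2, hμx⟩)
        (IsUnitMuMap.mul_mem_huaSubgroup ⟨y, hy.1, hy.2, hμy⟩ (hμ.inv hM hoi))
  exact hle hh

theorem inv_conj_mem_huaSubgroup (hM : IsLocalMoufangSet r U) (hoi : ¬ r.r o i)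
    (hμ : IsUnitMuMap r U o i μ) (hh : h ∈ HuaSubgroup r U o i) :
    μ⁻¹ * h * μ ∈ HuaSubgroup r U o i := by
  simpa using conj_mem_huaSubgroup hM hoi (hμ.inv hM hoi) hh

theorem exists_isUnitMuMap (hM : IsLocalMoufangSet r U) (hoi : ¬ r.r o i) {a : Perm X}
    (ha : a ∈ U i) (hao : ¬ r.r (a o) o) :
    ∃ u ∈ U o, ∃ c ∈ U o, u (a o) = i ∧ c i = a⁻¹ o ∧ IsUnitMuMap r U o i (u * a * c) := by
  have hio : ¬ r.r i o := mt r.iseqv.symm hoi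
  have hai : ¬ r.r (a o) i := by rwa [hM.rel_apply_iff ha]
  have hao' : ¬ r.r (a⁻¹ o) o := by
    rw [(hM.preserves i a ha).rel_inv_apply_iff]
    exact fun h => hao (r.iseqv.symm h)
  obtain ⟨u, ⟨hu, hua⟩, -⟩ := hM.lm1 o (a o) i hao hio
  obtain ⟨c, ⟨hc, hci⟩, -⟩ := hM.lm1 o i (a⁻¹ o) hio hao'
  refine ⟨u, hu, c, hc, hua, hci, a o, hao, hai, a, ha, rfl, ⟨u, hu, c, hc, rfl⟩, ?_, ?_⟩
  · simp [hM.fixes o c hc, hua]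
  · simp [hci, hM.fixes o u hu]

theorem exists_eq_mul_tau_mul (hM : IsLocalMoufangSet r U) (hoi : ¬ r.r o i)
    (hτ : IsUnitMuMap r U o i τ) (hv : v ∈ U i) (hvo : ¬ r.r (v o) o) :
    ∃ u ∈ U o, ¬ FixesClasses r u ∧
      ∃ h ∈ HuaSubgroup r U o i, ∃ c ∈ U o, v = u * τ * h * c := by
  obtain ⟨u, hu, c, hc, huv, -, hμ⟩ := exists_isUnitMuMap hM hoi hv hvo
  have hvi : ¬ r.r (v o) i := by rwa [hM.rel_apply_iff hv]
  refine ⟨u⁻¹, inv_mem hu, fun hu' => ?_, τ⁻¹ * (u * v * c),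
    (hτ.inv hM hoi).mul_mem_huaSubgroup hμ, c⁻¹, inv_mem hc, by group⟩
  exact not_fixesClasses_of_apply_eq huv hvi (by simpa using hu'.inv)

theorem exists_eq_conj_of_fixesClasses (hM : IsLocalMoufangSet r U) (hoi : ¬ r.r o i)
    (hv : v ∈ U i) (hvc : FixesClasses r v) {x : X} (hxo : ¬ r.r x o) (hxi : ¬ r.r x i) :
    ∃ u ∈ U o, u x = i ∧ ∃ k ∈ U o, FixesClasses r k ∧ ∃ h ∈ HuaSubgroup r U o i,
      ∃ w ∈ U i, FixesClasses r w ∧ v = u⁻¹ * k * h * w * u := by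
  have hio : ¬ r.r i o := mt r.iseqv.symm hoi
  obtain ⟨a, ⟨ha, rfl⟩, -⟩ := hM.lm1 i o x hoi hxi
  obtain ⟨u, hu, c, hc, hua, hca, hμ⟩ := exists_isUnitMuMap hM hoi ha hxo
  have hvao : ¬ r.r ((v * a) o) o := fun h => hxo (r.iseqv.trans (r.iseqv.symm (hvc _)) h)
  obtain ⟨u', hu', c', hc', hua', hca', hμ'⟩ := exists_isUnitMuMap hM hoi (mul_mem hv ha) hvao
  have hk : FixesClasses r (u * u'⁻¹) := by
    refine hM.fixesClasses_mul_inv hu hu' hvao ?_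
    rw [hua']
    simpa [hua] using (hM.preserves o u hu _ _).mp (hvc (a o))
  have hcc : FixesClasses r (c'⁻¹ * c) := by
    refine hM.fixesClasses_inv_mul hc hc' hio ?_
    rw [hca, hca', mul_inv_rev, Perm.mul_apply]
    exact ((hM.preserves i a ha).inv _ _).mp (r.iseqv.symm (hvc.inv o))
  have hG := hμ.mem_iSup
  -- `u * a * c` and `u' * (v * a) * c'` are μ-maps of `x` and `v x`; `h` is their quotient
  refine ⟨u, hu, hua, u * u'⁻¹, mul_mem hu (inv_mem hu'), hk,
    (u' * (v * a) * c') * (u * a * c)⁻¹, hμ'.mul_mem_huaSubgroup (hμ.inv hM hoi),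
    (u * a * c) * (c'⁻¹ * c) * (u * a * c)⁻¹,
    hM.conj_mem hG (mul_mem (inv_mem hc') hc) hμ.apply_o, hcc.conj (hM.preservesRel hG),
    by group⟩

/-- The cells `U∞ H U₀` and `U₀^∘ τ H U₀`, written `U₀ H U∞` and `U₀ H τ U₀^∘` in the paper. -/
def bigCell (r : Setoid X) (U : X → Subgroup (Perm X)) (o i : X) : Set (Perm X) :=
  {g | ∃ u ∈ U o, ∃ h ∈ HuaSubgroup r U o i, ∃ v ∈ U i, g = v * h * u}

def smallCell (r : Setoid X) (U : X → Subgroup (Perm X)) (o i : X) (τ : Perm X) :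
    Set (Perm X) :=
  {g | ∃ u ∈ U o, ∃ h ∈ HuaSubgroup r U o i, ∃ w ∈ U o, FixesClasses r w ∧ g = w * τ * h * u}

theorem mul_mul_mem_bigCell (hM : IsLocalMoufangSet r U) (hg : g ∈ bigCell r U o i)
    (hh : h ∈ HuaSubgroup r U o i) (hu : u ∈ U o) : g * h * u ∈ bigCell r U o i := by
  obtain ⟨u₀, hu₀, h₀, hh₀, v, hv, rfl⟩ := hg
  have hu₀' := hM.inv_conj_mem (huaSubgroup_le_iSup hh) hu₀ (apply_eq_of_mem_huaSubgroup hh).1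
  exact ⟨h⁻¹ * u₀ * h * u, mul_mem hu₀' hu, h₀ * h, mul_mem hh₀ hh, v, hv, by group⟩

theorem mul_mul_mem_smallCell (hM : IsLocalMoufangSet r U) (hg : g ∈ smallCell r U o i τ)
    (hh : h ∈ HuaSubgroup r U o i) (hu : u ∈ U o) : g * h * u ∈ smallCell r U o i τ := by
  obtain ⟨u₀, hu₀, h₀, hh₀, w, hw, hwc, rfl⟩ := hg
  have hu₀' := hM.inv_conj_mem (huaSubgroup_le_iSup hh) hu₀ (apply_eq_of_mem_huaSubgroup hh).1
  exact ⟨h⁻¹ * u₀ * h * u, mul_mem hu₀' hu, h₀ * h, mul_mem hh₀ hh, w, hw, hwc, by group⟩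

theorem mul_mul_mem_cells (hM : IsLocalMoufangSet r U)
    (hg : g ∈ bigCell r U o i ∪ smallCell r U o i τ) (hh : h ∈ HuaSubgroup r U o i)
    (hu : u ∈ U o) : g * h * u ∈ bigCell r U o i ∪ smallCell r U o i τ :=
  hg.imp (mul_mul_mem_bigCell hM · hh hu) (mul_mul_mem_smallCell hM · hh hu)

theorem mul_mem_bigCell_of_mem_i (hv : v ∈ U i) (hg : g ∈ bigCell r U o i) :
    v * g ∈ bigCell r U o i := by
  obtain ⟨u, hu, h, hh, v₀, hv₀, rfl⟩ := hg
  exact ⟨u, hu, h, hh, v * v₀, mul_mem hv hv₀, by group⟩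

theorem mul_mem_bigCell_of_mem_huaSubgroup (hM : IsLocalMoufangSet r U)
    (hh : h ∈ HuaSubgroup r U o i) (hg : g ∈ bigCell r U o i) : h * g ∈ bigCell r U o i := by
  obtain ⟨u, hu, h₀, hh₀, v, hv, rfl⟩ := hg
  have hv' := hM.conj_mem (huaSubgroup_le_iSup hh) hv (apply_eq_of_mem_huaSubgroup hh).2
  exact ⟨u, hu, h * h₀, mul_mem hh hh₀, h * v * h⁻¹, hv', by group⟩


theorem mul_mem_cells_of_mem_huaSubgroup (hM : IsLocalMoufangSet r U) (hoi : ¬ r.r o i)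
    (hτ : IsUnitMuMap r U o i τ) (hh : h ∈ HuaSubgroup r U o i)
    (hg : g ∈ bigCell r U o i ∪ smallCell r U o i τ) :
    h * g ∈ bigCell r U o i ∪ smallCell r U o i τ := by
  rcases hg with hg | ⟨u, hu, h₀, hh₀, w, hw, hwc, rfl⟩
  · exact Or.inl (mul_mem_bigCell_of_mem_huaSubgroup hM hh hg)
  · have hG := huaSubgroup_le_iSup hh
    refine Or.inr ⟨u, hu, τ⁻¹ * h * τ * h₀, mul_mem (inv_conj_mem_huaSubgroup hM hoi hτ hh) hh₀,
      h * w * h⁻¹, hM.conj_mem hG hw (apply_eq_of_mem_huaSubgroup hh).1,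
      hwc.conj (hM.preservesRel hG), by group⟩

theorem mul_tau_mem_bigCell (hM : IsLocalMoufangSet r U) (hoi : ¬ r.r o i)
    (hτ : IsUnitMuMap r U o i τ) (hc : c ∈ U o) (hnc : ¬ FixesClasses r c) :
    c * τ ∈ bigCell r U o i := by
  have hG := hτ.mem_iSup
  have hv : τ⁻¹ * c * τ ∈ U i := hM.inv_conj_mem hG hc hτ.apply_i
  have hvo : ¬ r.r ((τ⁻¹ * c * τ) o) o := fun h =>
    hnc ((FixesClasses.inv_conj_iff (hM.preservesRel hG)).mp (hM.fixesClasses_of_rel hv hoi h))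
  obtain ⟨u, hu, -, h, hh, c', hc', heq⟩ := exists_eq_mul_tau_mul hM hoi hτ hv hvo
  refine ⟨c', hc', τ * τ * h, mul_mem hτ.mul_self_mem_huaSubgroup hh,
    τ * u * τ⁻¹, hM.conj_mem hG hu hτ.apply_o, ?_⟩
  calc c * τ = τ * (τ⁻¹ * c * τ) := by group
    _ = _ := by rw [heq]; group

theorem mul_tau_mem_cells (hM : IsLocalMoufangSet r U) (hoi : ¬ r.r o i)
    (hτ : IsUnitMuMap r U o i τ) (hc : c ∈ U o) :
    c * τ ∈ bigCell r U o i ∪ smallCell r U o i τ := by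
  by_cases hcc : FixesClasses r c
  · exact Or.inr ⟨1, one_mem _, 1, one_mem _, c, hc, hcc, by group⟩
  · exact Or.inl (mul_tau_mem_bigCell hM hoi hτ hc hcc)

theorem mul_mem_cells_of_not_fixesClasses (hM : IsLocalMoufangSet r U) (hoi : ¬ r.r o i)
    (hτ : IsUnitMuMap r U o i τ) (hc : c ∈ U o) (hv : v ∈ U i) (hvc : ¬ FixesClasses r v) :
    c * v ∈ bigCell r U o i ∪ smallCell r U o i τ := by
  obtain ⟨u, hu, -, h, hh, c', hc', rfl⟩ :=
    exists_eq_mul_tau_mul hM hoi hτ hv fun h => hvc (hM.fixesClasses_of_rel hv hoi h)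
  simpa only [mul_assoc] using
    mul_mul_mem_cells hM (mul_tau_mem_cells hM hoi hτ (mul_mem hc hu)) hh hc'

theorem mul_mem_bigCell_of_fixesClasses_of_not (hM : IsLocalMoufangSet r U) (hoi : ¬ r.r o i)
    (hτ : IsUnitMuMap r U o i τ) (hc : c ∈ U o) (hcc : FixesClasses r c) (hv : v ∈ U i)
    (hvc : ¬ FixesClasses r v) : c * v ∈ bigCell r U o i := by
  obtain ⟨u, hu, huc, h, hh, c', hc', rfl⟩ :=
    exists_eq_mul_tau_mul hM hoi hτ hv fun h => hvc (hM.fixesClasses_of_rel hv hoi h)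
  have hcu : ¬ FixesClasses r (c * u) := by rwa [hcc.mul_iff_right]
  simpa only [mul_assoc] using
    mul_mul_mem_bigCell hM (mul_tau_mem_bigCell hM hoi hτ (mul_mem hc hu) hcu) hh hc'

theorem mul_mem_bigCell_of_fixesClasses (hM : IsLocalMoufangSet r U) (hoi : ¬ r.r o i)
    (hτ : IsUnitMuMap r U o i τ) (hc : c ∈ U o) (hcc : FixesClasses r c) (hv : v ∈ U i)
    (hvc : FixesClasses r v) : c * v ∈ bigCell r U o i := by
  have hG := hτ.mem_iSup
  have hP := hM.preservesRel hG
  obtain ⟨e, heo, hei, -⟩ := id hτ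
  obtain ⟨u, hu, hue, k, hk, -, h, hh, w, hw, hwc, hceq⟩ :=
    exists_eq_conj_of_fixesClasses hM hoi (hM.conj_mem hG hc hτ.apply_o) (hcc.conj hP) heo hei
  have huv : ¬ FixesClasses r (τ⁻¹ * u * τ * v) := by
    rw [hvc.mul_iff_left, FixesClasses.inv_conj_iff hP]
    exact not_fixesClasses_of_apply_eq hue hei
  have hwuv : τ⁻¹ * w * τ * (τ⁻¹ * u * τ * v) ∈ bigCell r U o i :=
    mul_mem_bigCell_of_fixesClasses_of_not hM hoi hτ (hM.inv_conj_mem hG hw hτ.apply_o)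
      ((FixesClasses.inv_conj_iff hP).mpr hwc) (mul_mem (hM.inv_conj_mem hG hu hτ.apply_i) hv) huv
  have hcv : c * v = τ⁻¹ * (u⁻¹ * k) * τ * (τ⁻¹ * h * τ * (τ⁻¹ * w * τ * (τ⁻¹ * u * τ * v))) :=
    calc c * v = τ⁻¹ * (τ * c * τ⁻¹) * τ * v := by group
      _ = _ := by rw [hceq]; group
  rw [hcv]
  exact mul_mem_bigCell_of_mem_i (hM.inv_conj_mem hG (mul_mem (inv_mem hu) hk) hτ.apply_i)
    (mul_mem_bigCell_of_mem_huaSubgroup hM (inv_conj_mem_huaSubgroup hM hoi hτ hh) hwuv)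

theorem mul_mem_cells (hM : IsLocalMoufangSet r U) (hoi : ¬ r.r o i)
    (hτ : IsUnitMuMap r U o i τ) (hc : c ∈ U o) (hv : v ∈ U i) :
    c * v ∈ bigCell r U o i ∪ smallCell r U o i τ := by
  by_cases hvc : FixesClasses r v
  swap
  · exact mul_mem_cells_of_not_fixesClasses hM hoi hτ hc hv hvc
  by_cases hcc : FixesClasses r c
  · exact Or.inl (mul_mem_bigCell_of_fixesClasses hM hoi hτ hc hcc hv hvc)
  have hio : ¬ r.r i o := mt r.iseqv.symm hoi
  have hci : ¬ r.r (c⁻¹ i) i := fun h =>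
    hcc (by simpa using (hM.fixesClasses_of_rel (inv_mem hc) hio h).inv)
  have hco : ¬ r.r (c⁻¹ i) o := by rwa [hM.rel_apply_iff (inv_mem hc)]
  -- decomposing with respect to the unit `c⁻¹ i` forces `u = c`
  obtain ⟨u, hu, hui, k, hk, hkc, h, hh, w, hw, hwc, rfl⟩ :=
    exists_eq_conj_of_fixesClasses hM hoi hv hvc hco hci
  obtain rfl : u = c := hM.eq_of_apply_eq hco hio hu hc hui (by simp)
  have hG := huaSubgroup_le_iSup hh
  have hkw := mul_mem_bigCell_of_fixesClasses hM hoi hτ hk hkc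
    (hM.conj_mem hG hw (apply_eq_of_mem_huaSubgroup hh).2) (hwc.conj (hM.preservesRel hG))
  rw [show u * (u⁻¹ * k * h * w * u) = k * (h * w * h⁻¹) * h * u by group]
  exact Or.inl (mul_mul_mem_bigCell hM hkw hh hu)

theorem mul_mem_cells_of_mem_o (hM : IsLocalMoufangSet r U) (hoi : ¬ r.r o i)
    (hτ : IsUnitMuMap r U o i τ) (hc : c ∈ U o)
    (hg : g ∈ bigCell r U o i ∪ smallCell r U o i τ) :
    c * g ∈ bigCell r U o i ∪ smallCell r U o i τ := by
  rcases hg with ⟨u, hu, h, hh, v, hv, rfl⟩ | ⟨u, hu, h, hh, w, hw, -, rfl⟩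
  · simpa only [mul_assoc] using mul_mul_mem_cells hM (mul_mem_cells hM hoi hτ hc hv) hh hu
  · simpa only [mul_assoc] using
      mul_mul_mem_cells hM (mul_tau_mem_cells hM hoi hτ (mul_mem hc hw)) hh hu

theorem tau_mul_mem_cells (hM : IsLocalMoufangSet r U) (hoi : ¬ r.r o i)
    (hτ : IsUnitMuMap r U o i τ) (hg : g ∈ bigCell r U o i ∪ smallCell r U o i τ) :
    τ * g ∈ bigCell r U o i ∪ smallCell r U o i τ := by
  have hG := hτ.mem_iSup
  rcases hg with ⟨u, hu, h, hh, v, hv, rfl⟩ | ⟨u, hu, h, hh, w, hw, -, rfl⟩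
  · rw [show τ * (v * h * u) = τ * v * τ⁻¹ * τ * h * u by group]
    exact mul_mul_mem_cells hM (mul_tau_mem_cells hM hoi hτ (hM.conj_mem hG hv hτ.apply_i)) hh hu
  · exact Or.inl ⟨u, hu, τ * τ * h, mul_mem hτ.mul_self_mem_huaSubgroup hh,
      τ * w * τ⁻¹, hM.conj_mem hG hw hτ.apply_o, by group⟩

theorem tau_inv_mul_mem_cells (hM : IsLocalMoufangSet r U) (hoi : ¬ r.r o i)
    (hτ : IsUnitMuMap r U o i τ) (hg : g ∈ bigCell r U o i ∪ smallCell r U o i τ) :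
    τ⁻¹ * g ∈ bigCell r U o i ∪ smallCell r U o i τ := by
  simpa [mul_assoc] using mul_mem_cells_of_mem_huaSubgroup hM hoi hτ
    (inv_mem hτ.mul_self_mem_huaSubgroup) (tau_mul_mem_cells hM hoi hτ hg)

theorem iSup_le_closure (hM : IsLocalMoufangSet r U) (hoi : ¬ r.r o i)
    (hτ : IsUnitMuMap r U o i τ) :
    (⨆ y, U y) ≤ Subgroup.closure ((U o : Set (Perm X)) ∪ {τ}) := by
  have hio : ¬ r.r i o := mt r.iseqv.symm hoi
  have hUo : U o ≤ Subgroup.closure ((U o : Set (Perm X)) ∪ {τ}) :=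
    fun _ hb => Subgroup.subset_closure (Or.inl hb)
  have hUi : U i ≤ Subgroup.closure ((U o : Set (Perm X)) ∪ {τ}) :=
    hM.rootGroup_le_of_apply_eq hτ.mem_iSup (Subgroup.subset_closure (Or.inr rfl)) hUo
      hτ.apply_o
  refine iSup_le fun z => ?_
  by_cases hzi : r.r z i
  · obtain ⟨c, ⟨hc, hcz⟩, -⟩ :=
      hM.lm1 o i z hio fun h => hoi (r.iseqv.trans (r.iseqv.symm h) hzi)
    exact hM.rootGroup_le_of_apply_eq (Subgroup.mem_iSup_of_mem o hc) (hUo hc) hUi hcz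
  · obtain ⟨a, ⟨ha, haz⟩, -⟩ := hM.lm1 i o z hoi hzi
    exact hM.rootGroup_le_of_apply_eq (Subgroup.mem_iSup_of_mem i ha) (hUi ha) hUo haz

theorem mem_cells (hM : IsLocalMoufangSet r U) (hoi : ¬ r.r o i) (hτ : IsUnitMuMap r U o i τ)
    (hg : g ∈ ⨆ y, U y) : g ∈ bigCell r U o i ∪ smallCell r U o i τ := by
  have hg' := iSup_le_closure hM hoi hτ hg
  clear hg
  induction hg' using Subgroup.closure_induction_left with
  | one => exact Or.inl ⟨1, one_mem _, 1, one_mem _, 1, one_mem _, by group⟩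
  | mul_left x hx y _ ih =>
    rcases hx with hx | rfl
    · exact mul_mem_cells_of_mem_o hM hoi hτ hx ih
    · exact tau_mul_mem_cells hM hoi hτ ih
  | inv_mul_cancel x hx y _ ih =>
    rcases hx with hx | rfl
    · exact mul_mem_cells_of_mem_o hM hoi hτ (inv_mem hx) ih
    · exact tau_inv_mul_mem_cells hM hoi hτ ih

theorem not_rel_apply_of_mem_bigCell (hM : IsLocalMoufangSet r U) (hoi : ¬ r.r o i)
    (hg : g ∈ bigCell r U o i) : ¬ r.r (g o) i := by
  obtain ⟨u, hu, h, hh, v, hv, rfl⟩ := hg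
  simpa [hM.fixes o u hu, (apply_eq_of_mem_huaSubgroup hh).1, hM.rel_apply_iff hv] using hoi

theorem rel_apply_of_mem_smallCell (hM : IsLocalMoufangSet r U) (hτ : IsUnitMuMap r U o i τ)
    (hg : g ∈ smallCell r U o i τ) : r.r (g o) i := by
  obtain ⟨u, hu, h, hh, w, -, hwc, rfl⟩ := hg
  simpa [hM.fixes o u hu, (apply_eq_of_mem_huaSubgroup hh).1, hτ.apply_o] using hwc i

theorem exists_eq_mul_of_apply_eq (hM : IsLocalMoufangSet r U) (hoi : ¬ r.r o i)
    (hτ : IsUnitMuMap r U o i τ) (hg : g ∈ ⨆ y, U y) (hgo : g o = o) :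
    ∃ u ∈ U o, ∃ h ∈ HuaSubgroup r U o i, g = h * u := by
  rcases mem_cells hM hoi hτ hg with ⟨u, hu, h, hh, v, hv, rfl⟩ | hg
  · have hvo : v o = o := by
      simpa [hM.fixes o u hu, (apply_eq_of_mem_huaSubgroup hh).1] using hgo
    obtain rfl : v = 1 := hM.eq_of_apply_eq hoi hoi hv (one_mem _) hvo rfl
    exact ⟨u, hu, h, hh, by group⟩
  · exact absurd (hgo ▸ rel_apply_of_mem_smallCell hM hτ hg) hoi

theorem mem_huaSubgroup_of_apply_eq (hM : IsLocalMoufangSet r U) (hoi : ¬ r.r o i)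
    (hτ : IsUnitMuMap r U o i τ) (hg : g ∈ ⨆ y, U y) (hgo : g o = o) (hgi : g i = i) :
    g ∈ HuaSubgroup r U o i := by
  have hio : ¬ r.r i o := mt r.iseqv.symm hoi
  obtain ⟨u, hu, h, hh, rfl⟩ := exists_eq_mul_of_apply_eq hM hoi hτ hg hgo
  have hui : u i = i :=
    (Perm.eq_inv_iff_eq.mpr (by exact hgi)).trans (apply_eq_of_mem_huaSubgroup (inv_mem hh)).2
  obtain rfl : u = 1 := hM.eq_of_apply_eq hio hio hu (one_mem _) hui rfl
  simpa using hh

end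

/-- the Bruhat-type decomposition
`G = U 0 · H · U ∞ ⊔ U 0 · H · τ · U 0 ^∘` (a disjoint union), and consequently
`G_0 = U 0 · H` and `G_{0,∞} = H`.  (With right actions, the paper's word
`a₁ a₂ ⋯ aₙ` is our product `aₙ * ⋯ * a₁`.) -/
theorem statement7 (r : Setoid X) (U : X → Subgroup (Equiv.Perm X))
    (hM : IsLocalMoufangSet r U) (o i : X) (hoi : ¬ r.r o i)
    (τ : Equiv.Perm X) (hτ : ∃ e, ¬ r.r e o ∧ ¬ r.r e i ∧ IsMuMap U o i e τ) :
    (∀ g ∈ (⨆ z : X, U z),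
      Xor' (∃ u ∈ U o, ∃ hh ∈ HuaSubgroup r U o i, ∃ v ∈ U i, g = v * hh * u)
        (∃ u ∈ U o, ∃ hh ∈ HuaSubgroup r U o i, ∃ w ∈ U o,
          (∀ b : X, r.r (w b) b) ∧ g = w * τ * hh * u)) ∧
    (∀ g ∈ (⨆ z : X, U z),
      (g o = o ↔ ∃ u ∈ U o, ∃ hh ∈ HuaSubgroup r U o i, g = hh * u)) ∧
    (∀ g ∈ (⨆ z : X, U z),
      ((g o = o ∧ g i = i) ↔ g ∈ HuaSubgroup r U o i)) := by
  refine ⟨fun g hg => ?_, fun g hg => ⟨exists_eq_mul_of_apply_eq hM hoi hτ hg, ?_⟩,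
    fun g hg => ⟨fun h => mem_huaSubgroup_of_apply_eq hM hoi hτ hg h.1 h.2,
      apply_eq_of_mem_huaSubgroup⟩⟩
  · have hdisj {g} (hA : g ∈ bigCell r U o i) (hB : g ∈ smallCell r U o i τ) : False :=
      not_rel_apply_of_mem_bigCell hM hoi hA (rel_apply_of_mem_smallCell hM hτ hB)
    rcases mem_cells hM hoi hτ hg with hA | hB
    · exact Or.inl ⟨hA, hdisj hA⟩
    · exact Or.inr ⟨hB, (hdisj · hB)⟩
  · rintro ⟨u, hu, h, hh, rfl⟩
    simp [hM.fixes o u hu, (apply_eq_of_mem_huaSubgroup hh).1]
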